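/- Let G̃ be a universal central extension of a perfect group G with kernel K = H₂(G), let G' be a perfect central extension of G with kernel D (for instance the universal cover of a Lie group G with D = π₁(G)). Then G̃ is also a universal central extension of G': the composite G̃ → G' → G exhibits G̃ → G' as a central extension, and for every central extension E → G' there exists a unique homomorphism G̃ → E over G'. -/

import Mathlib

/-!
An element `x` of a central extension `E` of a perfect group whose image is central
has all its commutators `⁅x, y⁆` in the central kernel, so `y ↦ ⁅x, y⁆` is a homomorphism
into the centre of `E`. It kills the commutator subgroup (its target is abelian) and the central
kernel, which together generate `E` because the quotient is perfect; so `x` is central.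
Hence a composite of central extensions of perfect groups is central, so every central
extension of `G'` is one of `G`, and the universal property of `G̃` over `G` gives the
lift over `G'`; the lift lies over `G'` by uniqueness of lifts over `G` into `G'`.
-/

open Subgroup
open scoped commutatorElement

section CentralExtension

variable {E G' : Type*} [Group E] [Group G']

theorem commutator_sup_ker_eq_top {q : E →* G'} (hqs : Function.Surjective q)
    (hG' : commutator G' = ⊤) : commutator E ⊔ q.ker = ⊤ := by
  rw [← comap_map_eq, map_commutator_eq, MonoidHom.range_eq_top_of_surjective q hqs,
    ← commutator_def, hG', comap_top]

def commutatorElementLeftHom (x : E) (hx : ∀ y, ⁅x, y⁆ ∈ center E) : E →* center E where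
  toFun y := ⟨⁅x, y⁆, hx y⟩
  map_one' := Subtype.ext (commutatorElement_one_right x)
  map_mul' y z := Subtype.ext <| by
    change ⁅x, y * z⁆ = ⁅x, y⁆ * ⁅x, z⁆
    calc ⁅x, y * z⁆ = ⁅x, y⁆ * (y * ⁅x, z⁆ * y⁻¹) := by
          simp only [commutatorElement_def]; group
      _ = ⁅x, y⁆ * ⁅x, z⁆ := by
          rw [mem_center_iff.mp (hx z) y, mul_inv_cancel_right]

theorem commutator_le_ker_of_centerValued {H : Type*} [Group H] (f : E →* center H) :
    commutator E ≤ f.ker := by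
  rw [commutator_def, commutator_le]
  rintro a - b -
  rw [MonoidHom.mem_ker, map_commutatorElement, commutatorElement_eq_one_iff_commute]
  exact Subtype.ext (mem_center_iff.mp (f b).2 (f a))

theorem mem_center_of_map_mem_center {q : E →* G'} (hqs : Function.Surjective q)
    (hqc : q.ker ≤ center E) (hG' : commutator G' = ⊤) {x : E}
    (hx : q x ∈ center G') : x ∈ center E := by
  have hxc : ∀ y, ⁅x, y⁆ ∈ center E := fun y => hqc <| by
    rw [MonoidHom.mem_ker, map_commutatorElement, commutatorElement_eq_one_iff_commute]
    exact (mem_center_iff.mp hx (q y)).symm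
  set f := commutatorElementLeftHom x hxc
  have hker : commutator E ⊔ q.ker ≤ f.ker := by
    refine sup_le (commutator_le_ker_of_centerValued f) fun k hk => ?_
    refine Subtype.ext (commutatorElement_eq_one_iff_commute.mpr ?_)
    exact mem_center_iff.mp (hqc hk) x
  rw [commutator_sup_ker_eq_top hqs hG'] at hker
  refine mem_center_iff.mpr fun y => ?_
  have hfy : f y = 1 := hker (mem_top y)
  have hxy : ⁅x, y⁆ = 1 := congrArg Subtype.val hfy
  exact (commutatorElement_eq_one_iff_commute.mp hxy).symm

theorem ker_comp_le_center {G : Type*} [Group G] {q : E →* G'} {p : G' →* G}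
    (hqs : Function.Surjective q) (hqc : q.ker ≤ center E) (hpc : p.ker ≤ center G')
    (hG' : commutator G' = ⊤) : (p.comp q).ker ≤ center E :=
  fun _ hx => mem_center_of_map_mem_center hqs hqc hG' (hpc hx)

end CentralExtension

theorem stmt19_general {Gt G G' : Type u} [Group Gt] [Group G] [Group G']
    (π : Gt →* G) (hπc : π.ker ≤ Subgroup.center Gt)
    (huniv : ∀ (L : Type u) [Group L] (ρ : L →* G),
      Function.Surjective ρ → ρ.ker ≤ Subgroup.center L →
        ∃! φ : Gt →* L, ρ.comp φ = π)
    (p : G' →* G) (hps : Function.Surjective p) (hpc : p.ker ≤ Subgroup.center G')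
    (hG'perf : commutator G' = ⊤)
    (Φ : Gt →* G') (hΦ : p.comp Φ = π) :
    Φ.ker ≤ Subgroup.center Gt ∧
    ∀ (E : Type u) [Group E] (q : E →* G'),
      Function.Surjective q → q.ker ≤ Subgroup.center E →
        ∃! ψ : Gt →* E, q.comp ψ = Φ := by
  refine ⟨?_, fun E _ q hqs hqc => ?_⟩
  · rw [← hΦ, ← MonoidHom.comap_ker] at hπc
    exact (Φ.ker_le_comap _).trans hπc
  obtain ⟨ψ, hψ, hψ_unique⟩ :=
    huniv E (p.comp q) (hps.comp hqs) (ker_comp_le_center hqs hqc hpc hG'perf)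
  refine ⟨ψ, (huniv G' p hps hpc).unique (by rw [← MonoidHom.comp_assoc, hψ]) hΦ,
    fun ψ' (hψ' : q.comp ψ' = Φ) => hψ_unique ψ' ?_⟩
  show (p.comp q).comp ψ' = π
  rw [MonoidHom.comp_assoc, hψ', hΦ]

/-- If G̃ is a universal central extension of a perfect group G and
G' is a perfect central extension of G, with Φ : G̃ → G' the surjection over G, then
Φ : G̃ → G' is itself a central extension, and G̃ is a universal central extension
of G': for every central extension E → G' there is a unique homomorphism G̃ → E
over G'. -/
theorem stmt19 {Gt G G' : Type u} [Group Gt] [Group G] [Group G']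
    (π : Gt →* G) (hπs : Function.Surjective π) (hπc : π.ker ≤ Subgroup.center Gt)
    (hGperf : commutator G = ⊤) (hGtperf : commutator Gt = ⊤)
    (huniv : ∀ (L : Type u) [Group L] (ρ : L →* G),
      Function.Surjective ρ → ρ.ker ≤ Subgroup.center L →
        ∃! φ : Gt →* L, ρ.comp φ = π)
    (p : G' →* G) (hps : Function.Surjective p) (hpc : p.ker ≤ Subgroup.center G')
    (hG'perf : commutator G' = ⊤)
    (Φ : Gt →* G') (hΦ : p.comp Φ = π) (hΦs : Function.Surjective Φ) :
    Φ.ker ≤ Subgroup.center Gt ∧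
    ∀ (E : Type u) [Group E] (q : E →* G'),
      Function.Surjective q → q.ker ≤ Subgroup.center E →
        ∃! ψ : Gt →* E, q.comp ψ = Φ :=
  stmt19_general π hπc huniv p hps hpc hG'perf Φ hΦ
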